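/- Let F be a field, let D be an associative F-algebra, and let τ : D → F be an F-linear map with τ(xy) = τ(yx) for all x, y ∈ D which is nondegenerate, i.e. τ(xz) = 0 for all z ∈ D implies x = 0. Let m ≥ 1, Y = Σ_{i=1}^{m-1} E_{i,i+1} ∈ M_m(D), Tr_τ(M) = τ(Σ_i M_{i,i}), B_Y(A,B) = Tr_τ(Y(AB − BA)), and c = {C ∈ M_m(D) : C_{i,m} = 0 for all i}. Then B_Y restricted to c × c is a nondegenerate alternating bilinear form: B_Y(A,A) = 0 for all A ∈ c, and if A ∈ c satisfies B_Y(A,B) = 0 for all B ∈ c, then A = 0. -/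

import Mathlib

/-!
Since `τ ∘ trace` is a trace form on `Mₘ(D)`, `B_Y(A, B) = τ(tr([Y, A] B))`. Testing `A`
against the elementary matrices `z • E_{k,i}` with `i ≠ m` (these lie in `c`) and using
nondegeneracy of `τ` shows that all rows of `[Y, A]` but the last vanish: `A` is constant along
its diagonals and vanishes in the first column below the diagonal. Together with the vanishing
last column this forces `A = 0`.
-/

open Matrix

section TraceForm

variable {ι D R G : Type*} [Fintype ι] [FunLike G D R]

theorem map_trace_mul_comm [NonUnitalNonAssocSemiring D] [AddCommMonoid R]
    [AddMonoidHomClass G D R] {τ : G} (hτ : ∀ x y : D, τ (x * y) = τ (y * x))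
    (M N : Matrix ι ι D) : τ (trace (M * N)) = τ (trace (N * M)) := by
  simp only [trace, diag, mul_apply, map_sum, hτ (M _ _)]
  exact Finset.sum_comm

theorem map_trace_mul_commutator [NonUnitalRing D] [AddCommGroup R] [AddMonoidHomClass G D R]
    {τ : G} (hτ : ∀ x y : D, τ (x * y) = τ (y * x)) (Y A B : Matrix ι ι D) :
    τ (trace (Y * (A * B - B * A))) = τ (trace ((Y * A - A * Y) * B)) := by
  have hcycle : τ (trace (Y * (B * A))) = τ (trace (A * Y * B)) := by
    rw [← Matrix.mul_assoc, map_trace_mul_comm hτ, Matrix.mul_assoc]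
  rw [Matrix.mul_sub, Matrix.sub_mul, trace_sub, trace_sub, map_sub, map_sub, hcycle,
    ← Matrix.mul_assoc Y A B]

theorem commutator_apply_eq_zero_of_orthogonal [DecidableEq ι] [Ring D] [AddCommGroup R]
    [AddMonoidHomClass G D R] {τ : G} (hτ : ∀ x y : D, τ (x * y) = τ (y * x))
    (hnd : ∀ x : D, (∀ z : D, τ (x * z) = 0) → x = 0) {Y A : Matrix ι ι D} {j : ι}
    (hA : ∀ B : Matrix ι ι D, (∀ r, B r j = 0) → τ (trace (Y * (A * B - B * A))) = 0)
    {i : ι} (hi : i ≠ j) (k : ι) : (Y * A - A * Y) i k = 0 := by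
  refine hnd _ fun z => ?_
  have hB : ∀ r, single k i z r j = 0 := fun r => single_apply_of_col_ne _ _ hi _
  rw [← hA _ hB, map_trace_mul_commutator hτ, trace_mul_single, MulOpposite.smul_eq_mul_unop,
    MulOpposite.unop_op]

end TraceForm

section Shift

variable {α : Type*} {n : ℕ}

theorem eq_zero_of_constant_diagonals [Zero α] {A : Matrix (Fin (n + 1)) (Fin (n + 1)) α}
    (hlast : ∀ i, A i (Fin.last n) = 0) (hzero : ∀ i : Fin n, A i.succ 0 = 0)
    (hshift : ∀ i k : Fin n, A i.succ k.succ = A i.castSucc k.castSucc) : A = 0 := by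
  have upper : ∀ q p, p ≤ q → A p q = 0 := by
    refine Fin.reverseInduction (fun p _ => hlast p) fun k ih p hp => ?_
    obtain ⟨i, rfl⟩ := Fin.exists_castSucc_eq.2 (hp.trans_lt k.castSucc_lt_last).ne
    rw [← hshift, ih]
    simpa using hp
  have lower : ∀ q p, q < p → A p q = 0 := by
    refine Fin.induction (fun p hp => ?_) fun k ih p hp => ?_
    · obtain ⟨i, rfl⟩ := Fin.exists_succ_eq.2 hp.ne'
      exact hzero i
    · obtain ⟨i, rfl⟩ := Fin.exists_succ_eq.2 ((Fin.zero_le _).trans_lt hp).ne'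
      rw [hshift, ih]
      simpa using hp
  ext p q
  exact (le_or_gt p q).elim (upper q p) (lower q p)

variable [NonAssocSemiring α] {Y : Matrix (Fin (n + 1)) (Fin (n + 1)) α}

theorem shift_mul_apply_castSucc
    (hY : ∀ i j : Fin (n + 1), Y i j = if (i : ℕ) + 1 = (j : ℕ) then 1 else 0)
    (A : Matrix (Fin (n + 1)) (Fin (n + 1)) α) (i : Fin n) (k : Fin (n + 1)) :
    (Y * A) i.castSucc k = A i.succ k := by
  rw [mul_apply, Finset.sum_eq_single i.succ]
  · simp [hY]
  · intro l _ hl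
    rw [hY, if_neg fun h => hl (Fin.ext (by simp [← h])), zero_mul]
  · simp

theorem mul_shift_apply_succ
    (hY : ∀ i j : Fin (n + 1), Y i j = if (i : ℕ) + 1 = (j : ℕ) then 1 else 0)
    (A : Matrix (Fin (n + 1)) (Fin (n + 1)) α) (p : Fin (n + 1)) (k : Fin n) :
    (A * Y) p k.succ = A p k.castSucc := by
  rw [mul_apply, Finset.sum_eq_single k.castSucc]
  · simp [hY]
  · intro l _ hl
    rw [hY, if_neg fun h => hl (Fin.ext (by simpa using h)), mul_zero]
  · simp

theorem mul_shift_apply_zero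
    (hY : ∀ i j : Fin (n + 1), Y i j = if (i : ℕ) + 1 = (j : ℕ) then 1 else 0)
    (A : Matrix (Fin (n + 1)) (Fin (n + 1)) α) (p : Fin (n + 1)) :
    (A * Y) p 0 = 0 := by
  simp [mul_apply, hY]

end Shift

/-- Let `F` be a field, `D` an associative `F`-algebra, and
`τ : D → F` an `F`-linear map with `τ(xy) = τ(yx)` which is nondegenerate. Let
`m ≥ 1`, `Y = Σ_{i=1}^{m-1} E_{i,i+1}`, `B_Y(A,B) = Tr_τ(Y(AB − BA))` and `c`
the matrices with vanishing last column. Then `B_Y` restricted to `c × c` is a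
nondegenerate alternating bilinear form. -/
theorem generalized_local_coefficients_stmt8
    {F D : Type*} [Field F] [Ring D] [Algebra F D]
    (τ : D →ₗ[F] F) (hτ : ∀ x y : D, τ (x * y) = τ (y * x))
    (hnd : ∀ x : D, (∀ z : D, τ (x * z) = 0) → x = 0)
    (m : ℕ) (hm : 1 ≤ m)
    (Y : Matrix (Fin m) (Fin m) D)
    (hY : ∀ i j : Fin m, Y i j = if (i : ℕ) + 1 = (j : ℕ) then 1 else 0) :
    (∀ A : Matrix (Fin m) (Fin m) D, (∀ i : Fin m, A i ⟨m - 1, by omega⟩ = 0) →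
        τ (∑ i, (Y * (A * A - A * A)) i i) = 0) ∧
      (∀ A : Matrix (Fin m) (Fin m) D, (∀ i : Fin m, A i ⟨m - 1, by omega⟩ = 0) →
        (∀ B : Matrix (Fin m) (Fin m) D, (∀ i : Fin m, B i ⟨m - 1, by omega⟩ = 0) →
          τ (∑ i, (Y * (A * B - B * A)) i i) = 0) → A = 0) := by
  obtain ⟨n, rfl⟩ : ∃ n, m = n + 1 := ⟨m - 1, by omega⟩
  refine ⟨fun A _ => by simp, fun A hA hB => ?_⟩
  have hcomm : ∀ (i : Fin n) k, (Y * A - A * Y) i.castSucc k = 0 := fun i =>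
    commutator_apply_eq_zero_of_orthogonal hτ hnd (j := Fin.last n) hB
      (Fin.castSucc_lt_last i).ne
  refine eq_zero_of_constant_diagonals hA (fun i => ?_) fun i k => ?_
  · simpa [shift_mul_apply_castSucc hY, mul_shift_apply_zero hY] using hcomm i 0
  · have h := hcomm i k.succ
    rwa [Matrix.sub_apply, shift_mul_apply_castSucc hY, mul_shift_apply_succ hY, sub_eq_zero] at h
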